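/- Let w be a string and i' a position such that w[i'..i'] is an L-root of a run r₀ with respect to ≺_ℓ and w[i'..j'] (with j' > i') is an L-root of a run r₁ with respect to ≺_{1-ℓ}, and both runs start strictly before position i'. Then w[i'-1] = w[i'] = w[j'], contradicting that w[i'..j'] is a Lyndon word (since a Lyndon word cannot have a border). Hence such a position i' cannot exist in a string. -/

import Mathlib

/-- A string is a Lyndon word w.r.t. an order `lt` on the alphabet:
it is (lexicographically) strictly smaller than every nonempty proper suffix. -/
def IsLyndonWrt {α : Type*} (lt : α → α → Prop) (w : List α) : Prop :=
  w ≠ [] ∧ ∀ i, 0 < i → i < w.length → List.Lex lt w (w.drop i)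

/-- The two opposite alphabet orders `≺₀` (the given one) and `≺₁` (its reverse). -/
def ltOrd {α : Type*} [LinearOrder α] : Bool → α → α → Prop
  | false, a, b => a < b
  | true,  a, b => b < a

/-- `p` is a period of `w`: `w[i] = w[i+p]` whenever both positions are valid. -/
def HasPeriod {α : Type*} (w : List α) (p : ℕ) : Prop :=
  ∀ i, i + p < w.length → w[i]? = w[i + p]?

/-- `substr w i j` is the substring `w[i..j]` (1-indexed, inclusive). -/
def substr {α : Type*} (w : List α) (i j : ℕ) : List α :=
  (w.drop (i - 1)).take (j - i + 1)

/-- `[i..j]` (1-indexed) is a run of `w` with (smallest) period `p`: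
`p` is the smallest period of `w[i..j]`, the exponent is at least 2, and the
periodicity with period `p` extends neither to the left nor to the right. -/
def IsRun {α : Type*} (w : List α) (i j p : ℕ) : Prop :=
  1 ≤ i ∧ i ≤ j ∧ j ≤ w.length ∧ 0 < p ∧
  HasPeriod (substr w i j) p ∧
  (∀ q, 0 < q → q < p → ¬ HasPeriod (substr w i j) q) ∧
  2 * p ≤ j - i + 1 ∧
  (i = 1 ∨ ¬ HasPeriod (substr w (i - 1) j) p) ∧
  (j = w.length ∨ ¬ HasPeriod (substr w i (j + 1)) p)

/-! The period-1 run covering positions `i' - 1` and `i'` gives `w[i'-1] = w[i']`, and the run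
with period `j' - i' + 1` starting before `i'` gives `w[i'-1] = w[j']`. Hence `w[i'..j']` begins
and ends with the same letter; a Lyndon word cannot, since it would not be smaller than its
one-letter suffix. -/

instance ltOrd.instIrrefl {α : Type*} [LinearOrder α] (b : Bool) :
    Std.Irrefl (ltOrd (α := α) b) where
  irrefl a := by cases b <;> exact lt_irrefl a

theorem IsLyndonWrt.getElem?_zero_ne_getElem?_length_sub_one {α : Type*} {lt : α → α → Prop}
    [Std.Irrefl lt] {s : List α} (hs : IsLyndonWrt lt s) (hlen : 2 ≤ s.length) :
    s[0]? ≠ s[s.length - 1]? := by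
  intro hborder
  have hlex := hs.2 (s.length - 1) (by omega) (by omega)
  rw [List.drop_length_sub_one hs.1, List.getLast_eq_getElem] at hlex
  obtain ⟨a, t, rfl⟩ := List.exists_cons_of_ne_nil hs.1
  have ha : (a :: t)[(a :: t).length - 1] = a := by
    simpa [List.getElem?_eq_getElem] using hborder.symm
  rw [ha] at hlex
  cases hlex with
  | cons h => nomatch h
  | rel h => exact irrefl a h

section substr

variable {α : Type*} (w : List α) (i j : ℕ)

theorem substr_getElem? {k : ℕ} (hk : k < j - i + 1) : (substr w i j)[k]? = w[i - 1 + k]? := by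
  simp [substr, hk]

theorem length_substr : (substr w i j).length = min (j - i + 1) (w.length - (i - 1)) := by
  simp [substr]

end substr

theorem IsRun.getElem?_add_period {α : Type*} {w : List α} {i j p k : ℕ}
    (hrun : IsRun w i j p) (hik : i ≤ k) (hkj : k + p ≤ j) : w[k - 1]? = w[k - 1 + p]? := by
  obtain ⟨hi, -, hj, -, hper, -⟩ := hrun
  have h := hper (k - i) (by rw [length_substr]; omega)
  rwa [substr_getElem? _ _ _ (by omega), substr_getElem? _ _ _ (by omega),
    show i - 1 + (k - i) = k - 1 by omega, show i - 1 + (k - i + p) = k - 1 + p by omega] at h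

theorem stmt9_general {α : Type*} [LinearOrder α] (w : List α) (ℓ : Bool)
    (i' j' i0 j0 i1 j1 : ℕ) (hij : i' < j')
    (hrun0 : IsRun w i0 j0 1) (h0a : i0 < i') (h0b : i' ≤ j0)
    (hrun1 : IsRun w i1 j1 (j' - i' + 1)) (h1a : i1 < i') (h1b : j' ≤ j1)
    (hroot1 : IsLyndonWrt (ltOrd (!ℓ)) (substr w i' j')) :
    False := by
  have hi0 : 1 ≤ i0 := hrun0.1
  have hj' : j' ≤ w.length := h1b.trans hrun1.2.2.1
  have hlen : (substr w i' j').length = j' - i' + 1 := by rw [length_substr]; omega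
  have hleft := hrun0.getElem?_add_period (k := i' - 1) (by omega) (by omega)
  have hright := hrun1.getElem?_add_period (k := i' - 1) (by omega) (by omega)
  rw [show i' - 1 - 1 + 1 = i' - 1 + 0 by omega] at hleft
  rw [show i' - 1 - 1 + (j' - i' + 1) = i' - 1 + (j' - i') by omega] at hright
  refine hroot1.getElem?_zero_ne_getElem?_length_sub_one (by omega) ?_
  rw [hlen, substr_getElem? _ _ _ (by omega), substr_getElem? _ _ _ (by omega),
    Nat.add_sub_cancel, ← hleft, hright]

/-- If `w[i'..i']` is an L-root (w.r.t. `≺_ℓ`) of a run `[i₀..j₀]` with period 1 that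
starts strictly before `i'`, and `w[i'..j']` (with `i' < j'`) is an L-root
(w.r.t. `≺_{1-ℓ}`) of a run `[i₁..j₁]` with period `j' - i' + 1` that also starts
strictly before `i'`, then a contradiction follows (`w[i'-1] = w[i'] = w[j']` would be
a border of the Lyndon word `w[i'..j']`); such a position `i'` cannot exist. -/
theorem stmt9 {α : Type*} [LinearOrder α] (w : List α) (ℓ : Bool)
    (i' j' i0 j0 i1 j1 : ℕ) (hij : i' < j')
    (hrun0 : IsRun w i0 j0 1) (h0a : i0 < i') (h0b : i' ≤ j0)
    (hrun1 : IsRun w i1 j1 (j' - i' + 1)) (h1a : i1 < i') (h1b : j' ≤ j1)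
    (hroot0 : IsLyndonWrt (ltOrd ℓ) (substr w i' i'))
    (hroot1 : IsLyndonWrt (ltOrd (!ℓ)) (substr w i' j')) :
    False :=
  stmt9_general w ℓ i' j' i0 j0 i1 j1 hij hrun0 h0a h0b hrun1 h1a h1b hroot1
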